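/- arXiv:2504.11706 — 6 statements merged into one kernel-verified Lean document; each statement's English description precedes it below -/
import Mathlib

section
/- The determinant of the distance matrix of a connected bipartite graph with at least 3 vertices is even. -/
private lemma zmod2_step (x y z : ZMod 2) (h : x + y = 1) : y + z + 1 = x + z := by
  revert h; revert x y z; decide

private lemma walk_length_parity {V : Type*} {G : SimpleGraph V}
    (C : G.Coloring (Fin 2)) {u v : V} (p : G.Walk u v) :
    (p.length : ZMod 2) = ((C u).val : ZMod 2) + ((C v).val : ZMod 2) := by
  induction p with
  | nil =>
    have : ∀ x : ZMod 2, x + x = 0 := by decide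
    simp [this]
  | cons h p ih =>
    rename_i a b w
    have hne : C a ≠ C b := C.valid h
    have h1 : (C a).val ≠ (C b).val := fun h' => hne (Fin.val_injective h')
    have h2 : (C a).val + (C b).val = 1 := by
      have := (C a).is_lt; have := (C b).is_lt; omega
    have hsum : ((C a).val : ZMod 2) + ((C b).val : ZMod 2) = 1 := by
      rw [← Nat.cast_add, h2]; rfl
    simp only [SimpleGraph.Walk.length_cons, Nat.cast_add, Nat.cast_one, ih]
    exact zmod2_step _ _ _ hsum

/-- The determinant of the distance matrix of a connected bipartite graph
with at least 3 vertices is even. -/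
theorem det_distance_matrix_bipartite_even
    {V : Type*} [Fintype V] [DecidableEq V] (G : SimpleGraph V)
    (hconn : G.Connected) (hbip : G.Colorable 2) (h3 : 3 ≤ Fintype.card V) :
    (2 : ℤ) ∣ (Matrix.of fun u v : V => (G.dist u v : ℤ)).det := by
  obtain ⟨C⟩ := hbip
  set c : V → ZMod 2 := fun v => ((C v).val : ZMod 2) with hc
  have hdist : ∀ u v : V, ((G.dist u v : ℕ) : ZMod 2) = c u + c v := by
    intro u v
    obtain ⟨p, hp⟩ := hconn.exists_walk_length_eq_dist u v
    rw [← hp]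
    exact walk_length_parity C p
  rw [show (2 : ℤ) = ((2 : ℕ) : ℤ) from rfl, ← ZMod.intCast_zmod_eq_zero_iff_dvd]
  have hmap : ((Matrix.of fun u v : V => (G.dist u v : ℤ)).det : ZMod 2)
      = ((Matrix.of fun u v : V => (G.dist u v : ℤ)).map (Int.cast : ℤ → ZMod 2)).det := by
    exact RingHom.map_det (Int.castRingHom (ZMod 2)) _
  rw [hmap]
  obtain ⟨u, w, hne, heq⟩ : ∃ u w : V, c u = c w ∧ u ≠ w := by
    have hcard : Fintype.card (ZMod 2) < Fintype.card V := by
      simpa using lt_of_lt_of_le (by norm_num) h3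
    obtain ⟨u, w, h1, h2⟩ := Fintype.exists_ne_map_eq_of_card_lt c hcard
    exact ⟨u, w, h2, h1⟩
  apply Matrix.det_zero_of_row_eq heq
  funext v
  simp only [Matrix.map_apply, Matrix.of_apply, Int.cast_natCast]
  rw [hdist u v, hdist w v, hne]
end

section
/- If H is an induced subgraph of a connected graph G such that for every pair of vertices u,v of H, d_H(u,v) = d_G(u,v) (in particular every induced subgraph of G of diameter 2), then every i×i minor of the generalized distance matrix of H (after identifying its variables with the corresponding variables of G) lies in the i-th distance ideal of G. -/
open Function

/-- The generalized distance matrix `diag(X) + D(G)` of `G` over `ℤ[X]`. -/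
noncomputable def genDistMatrix {V : Type*} [Fintype V] [DecidableEq V]
    (G : SimpleGraph V) : Matrix V V (MvPolynomial V ℤ) :=
  Matrix.of fun u v => if u = v then MvPolynomial.X u else (G.dist u v : MvPolynomial V ℤ)

/-- The `i`-th distance ideal of `G` over `ℤ[X]`: the ideal generated by the `i×i`
minors of the generalized distance matrix. -/
noncomputable def distIdeal {V : Type*} [Fintype V] [DecidableEq V]
    (G : SimpleGraph V) (i : ℕ) : Ideal (MvPolynomial V ℤ) :=
  Ideal.span {p | ∃ r c : Fin i → V, Injective r ∧ Injective c ∧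
    p = (((genDistMatrix G).submatrix r c).det)}

/-- If `H` is an induced subgraph of a connected graph `G` whose pairwise distances agree
with those of `G`, then every `i×i` minor of the generalized distance matrix of `H`
(with variables identified with those of `G`) lies in the `i`-th distance ideal of `G`. -/
theorem minor_of_induced_subgraph_mem_distIdeal
    {V : Type*} [Fintype V] [DecidableEq V] (G : SimpleGraph V) (hconn : G.Connected)
    (S : Set V) [DecidablePred (· ∈ S)]
    (hdist : ∀ u v : S, (G.induce S).dist u v = G.dist u v)
    (i : ℕ) (r c : Fin i → S) (hr : Injective r) (hc : Injective c) :
    ((Matrix.of fun u v : S =>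
        if u = v then MvPolynomial.X (u : V)
        else ((G.induce S).dist u v : MvPolynomial V ℤ)).submatrix r c).det
      ∈ distIdeal G i := by
  apply Ideal.subset_span
  refine ⟨Subtype.val ∘ r, Subtype.val ∘ c, Subtype.val_injective.comp hr,
    Subtype.val_injective.comp hc, ?_⟩
  congr 1
  ext a b
  simp only [Matrix.submatrix_apply, Matrix.of_apply, genDistMatrix, comp_apply]
  rw [hdist]
  congr 1
  simp [Subtype.ext_iff]
end

section
/- For the complete multipartite graph K_{p,q,r} with p,q,r ≥ 1, the integer matrix obtained from the generalized distance matrix by setting all variables equal to 2 has Smith normal form diag(1,1,4,0,...,0); in particular, its rank is 3 and Δ_3 = 4. -/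
open Function

/-- `d` is a gcd of the `k×k` minors of the square integer matrix `M`. -/
def IsMinorGcd {V : Type*} [Fintype V] [DecidableEq V] (k : ℕ)
    (M : Matrix V V ℤ) (d : ℤ) : Prop :=
  (∀ r c : Fin k → V, Injective r → Injective c → d ∣ (M.submatrix r c).det) ∧
  (∀ e : ℤ, (∀ r c : Fin k → V, Injective r → Injective c →
      e ∣ (M.submatrix r c).det) → e ∣ d)

/-- The part of a vertex of the tripartite vertex set. -/
def part3 {p q r : ℕ} : (Fin p ⊕ Fin q ⊕ Fin r) → Fin 3 :=
  Sum.elim (fun _ => 0) (Sum.elim (fun _ => 1) (fun _ => 2))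

/-- `2·I + D(K_{p,q,r})`, the generalized distance matrix of the complete tripartite
graph with all variables set to `2`: entries are `2` within a part (including the
diagonal) and `1` across parts. -/
def evalDistTripartite (p q r : ℕ) :
    Matrix (Fin p ⊕ Fin q ⊕ Fin r) (Fin p ⊕ Fin q ⊕ Fin r) ℤ :=
  Matrix.of fun u v => if part3 u = part3 v then 2 else 1

/-! `evalDistTripartite p q r` is the blow-up `A.submatrix part3 part3` of the `3×3` matrix
`A = I + J`, whose determinant is `4`. Every minor of the blow-up is a minor of `A` with rows and
columns possibly repeated: a `4×4` one must repeat a row, and a `3×3` one is `0` or `±det A`.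
Choosing one vertex in each part exhibits minors equal to `1`, `1` and `4`. -/

namespace Matrix

variable {R : Type*} [CommRing R]

theorem det_submatrix_eq_zero_of_not_injective {m ι κ : Type*} [Fintype m] [DecidableEq m]
    (A : Matrix ι κ R) {f : m → ι} (g : m → κ) (hf : ¬ Injective f) :
    (A.submatrix f g).det = 0 := by
  obtain ⟨i, j, hfij, hij⟩ : ∃ i j, f i = f j ∧ i ≠ j := by
    simpa [Injective] using hf
  exact det_zero_of_row_eq hij (funext fun k => by simp [hfij])

theorem det_submatrix_eq_zero_of_card_lt {m ι κ : Type*} [Fintype m] [DecidableEq m]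
    [Fintype ι] (A : Matrix ι κ R) (f : m → ι) (g : m → κ)
    (h : Fintype.card ι < Fintype.card m) : (A.submatrix f g).det = 0 := by
  obtain ⟨i, j, hij, hfij⟩ := Fintype.exists_ne_map_eq_of_card_lt f h
  exact A.det_submatrix_eq_zero_of_not_injective g fun hf => hij (hf hfij)

theorem det_submatrix_perm_perm {n : Type*} [Fintype n] [DecidableEq n]
    (A : Matrix n n R) (σ τ : Equiv.Perm n) :
    (A.submatrix σ τ).det = Equiv.Perm.sign (σ.symm.trans τ) * A.det := by
  have : A.submatrix σ τ = (A.submatrix id (σ.symm.trans τ)).submatrix σ σ := by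
    ext i j; simp
  rw [this, det_submatrix_equiv_self, det_permute']

theorem det_dvd_det_submatrix {n : Type*} [Fintype n] [DecidableEq n]
    (A : Matrix n n R) (f g : n → n) : A.det ∣ (A.submatrix f g).det := by
  by_cases hf : Injective f
  · by_cases hg : Injective g
    · have h := A.det_submatrix_perm_perm (Equiv.ofBijective f hf.bijective_of_finite)
        (Equiv.ofBijective g hg.bijective_of_finite)
      exact Dvd.intro_left _ h.symm
    · rw [← det_transpose (A.submatrix f g), transpose_submatrix,
        det_submatrix_eq_zero_of_not_injective _ _ hg]
      exact dvd_zero _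
  · rw [det_submatrix_eq_zero_of_not_injective _ _ hf]
    exact dvd_zero _

end Matrix

theorem isMinorGcd_of_dvd_of_det_eq {V : Type*} [Fintype V] [DecidableEq V] {k : ℕ}
    {M : Matrix V V ℤ} {d : ℤ}
    (hdvd : ∀ r c : Fin k → V, Injective r → Injective c → d ∣ (M.submatrix r c).det)
    (r c : Fin k → V) (hr : Injective r) (hc : Injective c) (hdet : (M.submatrix r c).det = d) :
    IsMinorGcd k M d :=
  ⟨hdvd, fun _ he => hdet ▸ he r c hr hc⟩

def partMatrix : Matrix (Fin 3) (Fin 3) ℤ :=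
  Matrix.of fun i j => if i = j then 2 else 1

theorem det_partMatrix : partMatrix.det = 4 := by decide

section Tripartite

variable {p q r : ℕ}

theorem evalDistTripartite_submatrix {k : ℕ} (rr cc : Fin k → Fin p ⊕ Fin q ⊕ Fin r) :
    (evalDistTripartite p q r).submatrix rr cc =
      partMatrix.submatrix (part3 ∘ rr) (part3 ∘ cc) :=
  rfl

def partRep (hp : 1 ≤ p) (hq : 1 ≤ q) (hr : 1 ≤ r) : Fin 3 → Fin p ⊕ Fin q ⊕ Fin r :=
  ![.inl ⟨0, hp⟩, .inr (.inl ⟨0, hq⟩), .inr (.inr ⟨0, hr⟩)]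

variable (hp : 1 ≤ p) (hq : 1 ≤ q) (hr : 1 ≤ r)

theorem part3_comp_partRep : part3 ∘ partRep hp hq hr = id := by
  funext i; fin_cases i <;> rfl

theorem partRep_injective : Injective (partRep hp hq hr) :=
  Injective.of_comp (f := part3) (part3_comp_partRep hp hq hr ▸ injective_id)

theorem evalDistTripartite_submatrix_partRep {k : ℕ} (f g : Fin k → Fin 3) :
    (evalDistTripartite p q r).submatrix (partRep hp hq hr ∘ f) (partRep hp hq hr ∘ g) =
      partMatrix.submatrix f g := by
  rw [evalDistTripartite_submatrix, ← comp_assoc, ← comp_assoc, part3_comp_partRep]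
  rfl

end Tripartite

/-- For `K_{p,q,r}` with `p,q,r ≥ 1`, the matrix `2·I + D(K_{p,q,r})` has Smith normal
form `diag(1,1,4,0,…,0)`: `Δ₁ = 1`, `Δ₂ = 1`, `Δ₃ = 4`, and all `4×4` minors vanish. -/
theorem snf_tripartite_evaluated (p q r : ℕ) (hp : 1 ≤ p) (hq : 1 ≤ q) (hr : 1 ≤ r) :
    IsMinorGcd 1 (evalDistTripartite p q r) 1 ∧
    IsMinorGcd 2 (evalDistTripartite p q r) 1 ∧
    IsMinorGcd 3 (evalDistTripartite p q r) 4 ∧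
    (∀ rr cc : Fin 4 → Fin p ⊕ Fin q ⊕ Fin r, Injective rr → Injective cc →
      ((evalDistTripartite p q r).submatrix rr cc).det = 0) := by
  set s := partRep hp hq hr
  have hs : Injective s := partRep_injective hp hq hr
  have minor_eq (k : ℕ) (f g : Fin k → Fin 3) (d : ℤ) (hf : Injective f) (hg : Injective g)
      (hdvd : ∀ rr cc : Fin k → Fin p ⊕ Fin q ⊕ Fin r, Injective rr → Injective cc →
        d ∣ ((evalDistTripartite p q r).submatrix rr cc).det)
      (hdet : (partMatrix.submatrix f g).det = d) :
      IsMinorGcd k (evalDistTripartite p q r) d :=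
    isMinorGcd_of_dvd_of_det_eq hdvd (s ∘ f) (s ∘ g) (hs.comp hf) (hs.comp hg)
      (by rw [evalDistTripartite_submatrix_partRep, hdet])
  refine ⟨minor_eq 1 ![0] ![1] 1 (by decide) (by decide) (fun _ _ _ _ => one_dvd _) (by decide),
    minor_eq 2 ![0, 1] ![0, 2] 1 (by decide) (by decide) (fun _ _ _ _ => one_dvd _) (by decide),
    minor_eq 3 id id 4 injective_id injective_id (fun rr cc _ _ => ?_) det_partMatrix,
    fun rr cc _ _ => ?_⟩
  · rw [evalDistTripartite_submatrix, ← det_partMatrix]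
    exact partMatrix.det_dvd_det_submatrix _ _
  · rw [evalDistTripartite_submatrix]
    exact partMatrix.det_submatrix_eq_zero_of_card_lt _ _ (by simp)
end

section
/- If a connected graph G contains P_5 (the path on five vertices) as an induced subgraph, then the third distance ideal of G over ℚ[X] is the unit ideal. -/
open Function

/-- The generalized distance matrix `diag(X) + D(G)` of `G` over `ℚ[X]`. -/
noncomputable def genDistMatrixQ {V : Type*} [Fintype V] [DecidableEq V]
    (G : SimpleGraph V) : Matrix V V (MvPolynomial V ℚ) :=
  Matrix.of fun u v => if u = v then MvPolynomial.X u else (G.dist u v : MvPolynomial V ℚ)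

/-- The `i`-th distance ideal of `G` over `ℚ[X]`. -/
noncomputable def distIdealQ {V : Type*} [Fintype V] [DecidableEq V]
    (G : SimpleGraph V) (i : ℕ) : Ideal (MvPolynomial V ℚ) :=
  Ideal.span {p | ∃ r c : Fin i → V, Injective r ∧ Injective c ∧
    p = (((genDistMatrixQ G).submatrix r c).det)}

set_option maxHeartbeats 1000000 in
/-- If a connected graph `G` contains the path `P₅` as an induced subgraph, then the
third distance ideal of `G` over `ℚ[X]` is the unit ideal. -/
theorem distIdealQ_three_eq_top_of_induced_P5
    {V : Type*} [Fintype V] [DecidableEq V] (G : SimpleGraph V) (hconn : G.Connected)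
    (v : Fin 5 → V) (hv : Injective v)
    (hadj : ∀ i j : Fin 5, G.Adj (v i) (v j) ↔ (i.val + 1 = j.val ∨ j.val + 1 = i.val)) :
    distIdealQ G 3 = ⊤ := by
  -- distances along the path
  have hone : ∀ i j : Fin 5, i.val + 1 = j.val → G.dist (v i) (v j) = 1 := fun i j h =>
    SimpleGraph.dist_eq_one_iff_adj.mpr ((hadj i j).mpr (Or.inl h))
  have htwo : ∀ i j : Fin 5, i ≠ j → ¬ (i.val + 1 = j.val ∨ j.val + 1 = i.val) →
      2 ≤ G.dist (v i) (v j) := by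
    intro i j hij hna
    have h0 : 0 < G.dist (v i) (v j) := hconn.pos_dist_of_ne (hv.ne hij)
    have h1 : G.dist (v i) (v j) ≠ 1 := fun h =>
      hna ((hadj i j).mp (SimpleGraph.dist_eq_one_iff_adj.mp h))
    omega
  have d01 : G.dist (v 0) (v 1) = 1 := hone 0 1 rfl
  have d12 : G.dist (v 1) (v 2) = 1 := hone 1 2 rfl
  have d23 : G.dist (v 2) (v 3) = 1 := hone 2 3 rfl
  have d34 : G.dist (v 3) (v 4) = 1 := hone 3 4 rfl
  have d02 : G.dist (v 0) (v 2) = 2 := by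
    have hle := hconn.dist_triangle (v := v 1) (u := v 0) (w := v 2)
    have hge := htwo 0 2 (by decide) (by decide)
    omega
  have d13 : G.dist (v 1) (v 3) = 2 := by
    have hle := hconn.dist_triangle (v := v 2) (u := v 1) (w := v 3)
    have hge := htwo 1 3 (by decide) (by decide)
    omega
  have d24 : G.dist (v 2) (v 4) = 2 := by
    have hle := hconn.dist_triangle (v := v 3) (u := v 2) (w := v 4)
    have hge := htwo 2 4 (by decide) (by decide)
    omega
  set a := G.dist (v 0) (v 3) with ha
  set b := G.dist (v 1) (v 4) with hb
  set c := G.dist (v 0) (v 4) with hc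
  have ha2 : 2 ≤ a := htwo 0 3 (by decide) (by decide)
  have ha3 : a ≤ 3 := by
    have := hconn.dist_triangle (v := v 2) (u := v 0) (w := v 3); omega
  have hb2 : 2 ≤ b := htwo 1 4 (by decide) (by decide)
  have hb3 : b ≤ 3 := by
    have := hconn.dist_triangle (v := v 3) (u := v 1) (w := v 4); omega
  have hc2 : 2 ≤ c := htwo 0 4 (by decide) (by decide)
  have hca : c ≤ a + 1 := by
    have := hconn.dist_triangle (v := v 3) (u := v 0) (w := v 4); omega
  have hcb : c ≤ b + 1 := by
    have h4 : G.dist (v 1) (v 4) = G.dist (v 1) (v 4) := rfl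
    have := hconn.dist_triangle (v := v 1) (u := v 0) (w := v 4); omega
  clear_value a b c
  -- vertex distinctness
  have hne : ∀ i j : Fin 5, i ≠ j → v i ≠ v j := fun i j h => hv.ne h
  have n01 : v 0 ≠ v 1 := hne 0 1 (by decide)
  have n02 : v 0 ≠ v 2 := hne 0 2 (by decide)
  have n03 : v 0 ≠ v 3 := hne 0 3 (by decide)
  have n04 : v 0 ≠ v 4 := hne 0 4 (by decide)
  have n21 : v 2 ≠ v 1 := hne 2 1 (by decide)
  have n23 : v 2 ≠ v 3 := hne 2 3 (by decide)
  have n24 : v 2 ≠ v 4 := hne 2 4 (by decide)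
  have n31 : v 3 ≠ v 1 := hne 3 1 (by decide)
  have n32 : v 3 ≠ v 2 := hne 3 2 (by decide)
  have n34 : v 3 ≠ v 4 := hne 3 4 (by decide)
  have n41 : v 4 ≠ v 1 := hne 4 1 (by decide)
  have n42 : v 4 ≠ v 2 := hne 4 2 (by decide)
  have n43 : v 4 ≠ v 3 := hne 4 3 (by decide)
  -- symmetric distances
  have dists : ∀ u w : V, G.dist u w = G.dist w u := fun u w => SimpleGraph.dist_comm
  -- the two minors
  have hr1 : Injective ![v 0, v 2, v 3] := by
    intro i j h; fin_cases i <;> fin_cases j <;> simp_all [hv.eq_iff]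
  have hc1 : Injective ![v 1, v 2, v 4] := by
    intro i j h; fin_cases i <;> fin_cases j <;> simp_all [hv.eq_iff]
  have hr2 : Injective ![v 0, v 2, v 4] := by
    intro i j h; fin_cases i <;> fin_cases j <;> simp_all [hv.eq_iff]
  have hc2' : Injective ![v 1, v 2, v 3] := by
    intro i j h; fin_cases i <;> fin_cases j <;> simp_all [hv.eq_iff]
  have hg1 : ((genDistMatrixQ G).submatrix ![v 0, v 2, v 3] ![v 1, v 2, v 4]).det
      ∈ distIdealQ G 3 :=
    Ideal.subset_span ⟨![v 0, v 2, v 3], ![v 1, v 2, v 4], hr1, hc1, rfl⟩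
  have hg2 : ((genDistMatrixQ G).submatrix ![v 0, v 2, v 4] ![v 1, v 2, v 3]).det
      ∈ distIdealQ G 3 :=
    Ideal.subset_span ⟨![v 0, v 2, v 4], ![v 1, v 2, v 3], hr2, hc2', rfl⟩
  -- compute the minors
  have e1 : ((genDistMatrixQ G).submatrix ![v 0, v 2, v 3] ![v 1, v 2, v 4]).det
      = (1 - 2 * (c : MvPolynomial V ℚ)) * MvPolynomial.X (v 2) + ((c : MvPolynomial V ℚ) + 4) := by
    rw [Matrix.det_fin_three]
    simp only [Matrix.submatrix_apply, Matrix.cons_val_zero, Matrix.cons_val_one,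
      Matrix.head_cons, Matrix.cons_val_two, Matrix.tail_cons, genDistMatrixQ, Matrix.of_apply]
    simp only [n01, n02, n04, n21, n24, n31, n32, n34, if_true, if_false, ite_false, ite_true,
      if_neg, eq_self_iff_true]
    rw [d01, d02, dists (v 2) (v 1), d12, d24, dists (v 3) (v 1), d13, dists (v 3) (v 2), d23,
      d34, ← hc]
    push_cast
    ring
  have e2 : ((genDistMatrixQ G).submatrix ![v 0, v 2, v 4] ![v 1, v 2, v 3]).det
      = (1 - (a : MvPolynomial V ℚ) * (b : MvPolynomial V ℚ)) * MvPolynomial.X (v 2)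
        + (2 * (a : MvPolynomial V ℚ) + 2 * (b : MvPolynomial V ℚ) - 4) := by
    rw [Matrix.det_fin_three]
    simp only [Matrix.submatrix_apply, Matrix.cons_val_zero, Matrix.cons_val_one,
      Matrix.head_cons, Matrix.cons_val_two, Matrix.tail_cons, genDistMatrixQ, Matrix.of_apply]
    simp only [n01, n02, n03, n21, n23, n41, n42, n43, if_true, if_false, ite_false, ite_true,
      if_neg, eq_self_iff_true]
    rw [d01, d02, dists (v 2) (v 1), d12, d23, dists (v 4) (v 1), dists (v 4) (v 2), d24,
      dists (v 4) (v 3), d34, ← ha, ← hb]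
    push_cast
    ring
  -- the unit combination
  set k : ℚ := (1 - (a : ℚ) * b) * ((c : ℚ) + 4) - (1 - 2 * (c : ℚ)) * (2 * a + 2 * b - 4) with hk
  have hkne : k ≠ 0 := by
    rw [hk]
    have hc4 : c ≤ 4 := by omega
    interval_cases a <;> interval_cases b <;> interval_cases c <;> norm_num
  have hmem : (MvPolynomial.C k : MvPolynomial V ℚ) ∈ distIdealQ G 3 := by
    have : (MvPolynomial.C k : MvPolynomial V ℚ)
        = (1 - (a : MvPolynomial V ℚ) * b) *
            (((genDistMatrixQ G).submatrix ![v 0, v 2, v 3] ![v 1, v 2, v 4]).det)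
          - (1 - 2 * (c : MvPolynomial V ℚ)) *
            (((genDistMatrixQ G).submatrix ![v 0, v 2, v 4] ![v 1, v 2, v 3]).det) := by
      rw [e1, e2, hk]
      simp only [map_sub, map_add, map_mul, map_one, map_natCast, map_ofNat]
      ring
    rw [this]
    exact Ideal.sub_mem _ (Ideal.mul_mem_left _ _ hg1) (Ideal.mul_mem_left _ _ hg2)
  exact Ideal.eq_top_of_isUnit_mem _ hmem
    ((isUnit_iff_ne_zero.mpr hkne).map (MvPolynomial.C : ℚ →+* MvPolynomial V ℚ))
end

section
/- The third invariant factor of the distance matrix of any connected bipartite graph with at least 4 vertices, other than K_{2,2}, equals 2; equivalently, for such graphs Δ_2(D(G)) = 1 and Δ_3(D(G)) = 2. -/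
open Function

section AuxLemmas

lemma isMinorGcd_inj2 {α : Type*} {a b : α} (h : a ≠ b) : Injective ![a, b] := by
  intro i j hij; fin_cases i <;> fin_cases j <;> simp_all

lemma isMinorGcd_inj3 {α : Type*} {a b c : α} (h1 : a ≠ b) (h2 : a ≠ c) (h3 : b ≠ c) :
    Injective ![a, b, c] := by
  intro i j hij; fin_cases i <;> fin_cases j <;> simp_all

variable {V : Type*} {G : SimpleGraph V}

lemma fin2_cast_sum {a b : Fin 2} (h : a ≠ b) :
    ((a : ℕ) : ZMod 2) + ((b : ℕ) : ZMod 2) = 1 := by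
  fin_cases a <;> fin_cases b <;> simp_all

lemma fin2_cast_ne {a b : Fin 2} (h : a ≠ b) : ((a : ℕ) : ZMod 2) ≠ ((b : ℕ) : ZMod 2) := by
  fin_cases a <;> fin_cases b <;> simp_all

lemma walk_parity (C : G.Coloring (Fin 2)) {u v : V} (p : G.Walk u v) :
    (p.length : ZMod 2) = ((C u : ℕ) : ZMod 2) + ((C v : ℕ) : ZMod 2) := by
  induction p with
  | nil => simp [CharTwo.add_self_eq_zero]
  | cons h q ih =>
    rename_i a b c
    have h1 : ((C a : ℕ) : ZMod 2) + ((C b : ℕ) : ZMod 2) = 1 := fin2_cast_sum (C.valid h)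
    simp only [SimpleGraph.Walk.length_cons, Nat.cast_add, Nat.cast_one, ih]
    have h2 : (2 : ZMod 2) = 0 := by decide
    linear_combination h1 + (1 - ((C a : ℕ) : ZMod 2)) * h2

lemma dist_parity (hconn : G.Connected) (C : G.Coloring (Fin 2)) (u v : V) :
    (G.dist u v : ZMod 2) = ((C u : ℕ) : ZMod 2) + ((C v : ℕ) : ZMod 2) := by
  obtain ⟨p, hp⟩ := (hconn.preconnected u v).exists_walk_length_eq_dist
  rw [← hp]; exact walk_parity C p

lemma pred_of_dist (hconn : G.Connected) {u v : V} {n : ℕ} (h : G.dist u v = n + 1) :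
    ∃ w, G.Adj w v ∧ G.dist u w = n := by
  have hne : u ≠ v := by rintro rfl; simp [SimpleGraph.dist_self] at h
  obtain ⟨p, hp⟩ := (hconn.preconnected u v).exists_walk_length_eq_dist
  have hne' : v ≠ u := hne.symm
  obtain ⟨w, hadj, q, hq⟩ := p.reverse.exists_eq_cons_of_ne hne'
  have hlen : q.length = n := by
    have := congrArg SimpleGraph.Walk.length hq
    simp [hp, h] at this
    omega
  refine ⟨w, hadj.symm, ?_⟩
  have h1 : G.dist u w ≤ n := by
    have := SimpleGraph.dist_le q.reverse
    simpa [hlen] using this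
  have h2 : G.dist u v ≤ G.dist u w + G.dist w v := hconn.dist_triangle
  have h3 : G.dist w v ≤ 1 := SimpleGraph.dist_le hadj.symm.toWalk
  omega

lemma exists_dist_three (hconn : G.Connected) (h : ∃ u v : V, 3 ≤ G.dist u v) :
    ∃ u v : V, G.dist u v = 3 := by
  obtain ⟨u, v, huv⟩ := h
  obtain ⟨n, hn⟩ : ∃ n, G.dist u v = n := ⟨_, rfl⟩
  induction n using Nat.strong_induction_on generalizing v with
  | _ n ih =>
    rcases Nat.lt_or_ge n 4 with h4 | h4
    · exact ⟨u, v, by omega⟩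
    · obtain ⟨m, rfl⟩ : ∃ m, n = m + 1 := ⟨n - 1, by omega⟩
      obtain ⟨w, _, hw⟩ := pred_of_dist hconn (hn ▸ rfl : G.dist u v = m + 1)
      exact ih m (by omega) w (by omega) hw

lemma adj_of_parity (hconn : G.Connected) (C : G.Coloring (Fin 2)) {u v : V}
    (hne : u ≠ v) (hd : G.dist u v ≤ 2)
    (hf : ((C u : ℕ) : ZMod 2) ≠ ((C v : ℕ) : ZMod 2)) : G.Adj u v := by
  have hp := dist_parity hconn C u v
  have h0 : G.dist u v ≠ 0 := fun h => hne (hconn.dist_eq_zero_iff.mp h)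
  have h12 : G.dist u v = 1 ∨ G.dist u v = 2 := by omega
  rcases h12 with h1 | h2
  · exact SimpleGraph.dist_eq_one_iff_adj.mp h1
  · rw [h2] at hp
    exact absurd ((by decide : ∀ x y : ZMod 2, ((2 : ℕ) : ZMod 2) = x + y → x = y) _ _ hp) hf

lemma dist_two_of_common (hconn : G.Connected) (C : G.Coloring (Fin 2)) {v x y : V}
    (h1 : G.Adj v x) (h2 : G.Adj v y) (hxy : x ≠ y) : G.dist x y = 2 := by
  have hnadj : ¬ G.Adj x y := by
    intro h
    exact (by decide : ∀ a b c : Fin 2, a ≠ b → b ≠ c → a ≠ c → False) _ _ _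
      (C.valid h1) (C.valid h) (C.valid h2)
  have hle : G.dist x y ≤ 2 := by
    have ht : G.dist x y ≤ G.dist x v + G.dist v y := hconn.dist_triangle
    have hxv : G.dist x v = 1 := SimpleGraph.dist_eq_one_iff_adj.mpr h1.symm
    have hvy : G.dist v y = 1 := SimpleGraph.dist_eq_one_iff_adj.mpr h2
    omega
  have h0 : G.dist x y ≠ 0 := fun h => hxy (hconn.dist_eq_zero_iff.mp h)
  have hne1 : G.dist x y ≠ 1 := fun h => hnadj (SimpleGraph.dist_eq_one_iff_adj.mp h)
  omega

variable [Fintype V]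

lemma exists_neighbor (hconn : G.Connected) (h2 : 2 ≤ Fintype.card V) (v : V) :
    ∃ w, G.Adj v w := by
  obtain ⟨u, hu⟩ := Fintype.exists_ne_of_one_lt_card (by omega) v
  obtain ⟨p⟩ := hconn v u
  obtain ⟨w, hadj, q, -⟩ := p.exists_eq_cons_of_ne (Ne.symm hu)
  exact ⟨w, hadj⟩

lemma minor_even (hconn : G.Connected) (C : G.Coloring (Fin 2)) (r c : Fin 3 → V) :
    (2 : ℤ) ∣ ((Matrix.of fun u v : V => (G.dist u v : ℤ)).submatrix r c).det := by
  set X := (Matrix.of fun u v : V => (G.dist u v : ℤ)).submatrix r c with hX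
  have key : ((X.det : ℤ) : ZMod 2) = 0 := by
    have h : ((X.det : ℤ) : ZMod 2) = ((Int.castRingHom (ZMod 2)).mapMatrix X).det := by
      simpa using RingHom.map_det (Int.castRingHom (ZMod 2)) X
    have hm : (Int.castRingHom (ZMod 2)).mapMatrix X =
        Matrix.of (fun i j => (((C (r i) : ℕ) : ZMod 2) + ((C (c j) : ℕ) : ZMod 2))) := by
      ext i j
      simp [hX, RingHom.mapMatrix_apply, Matrix.map_apply, Matrix.submatrix_apply,
        dist_parity hconn C]
    rw [h, hm, Matrix.det_fin_three]
    simp only [Matrix.of_apply]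
    ring
  exact_mod_cast (ZMod.intCast_zmod_eq_zero_iff_dvd _ 2).mp key

lemma map_elim_K22 {v0 a b c : V}
    (hv0a : G.Adj v0 a) (hv0b : G.Adj v0 b) (hac : G.Adj a c) (hbc : G.Adj b c)
    (hnv0c : ¬ G.Adj v0 c) (hnab : ¬ G.Adj a b) :
    ∀ s t : Fin 2 ⊕ Fin 2,
      G.Adj (Sum.elim ![v0, c] ![a, b] s) (Sum.elim ![v0, c] ![a, b] t) ↔
      (completeBipartiteGraph (Fin 2) (Fin 2)).Adj s t := by
  have hncv0 : ¬ G.Adj c v0 := fun h => hnv0c h.symm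
  have hnba : ¬ G.Adj b a := fun h => hnab h.symm
  rintro (i | i) (j | j) <;> fin_cases i <;> fin_cases j <;>
    simp [hv0a, hv0b, hac, hbc, hac.symm, hbc.symm, hv0a.symm, hv0b.symm, hnv0c, hnab,
      hncv0, hnba]

lemma inj_elim_K22 {v0 a b c : V} (h1 : v0 ≠ a) (h2 : v0 ≠ b) (h3 : v0 ≠ c)
    (h4 : a ≠ b) (h5 : a ≠ c) (h6 : b ≠ c) :
    Injective (Sum.elim ![v0, c] ![a, b] : Fin 2 ⊕ Fin 2 → V) := by
  rintro (i | i) (j | j) h <;> fin_cases i <;> fin_cases j <;> simp_all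

lemma K22_case (hconn : G.Connected) (C : G.Coloring (Fin 2)) (h4 : 4 ≤ Fintype.card V)
    (hdeg : ∀ v x y z : V, G.Adj v x → G.Adj v y → G.Adj v z → x = y ∨ x = z ∨ y = z)
    (hdist : ∀ u v : V, G.dist u v ≤ 2) :
    Nonempty (G ≃g completeBipartiteGraph (Fin 2) (Fin 2)) := by
  classical
  set f : V → ZMod 2 := fun v => ((C v : ℕ) : ZMod 2) with hf
  have hadj_ne : ∀ {u v : V}, G.Adj u v → f u ≠ f v := fun h => fin2_cast_ne (C.valid h)
  have hadj_of : ∀ {u v : V}, u ≠ v → f u ≠ f v → G.Adj u v :=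
    fun hne hfn => adj_of_parity hconn C hne (hdist _ _) hfn
  have hz : ∀ x y z : ZMod 2, x ≠ y → z ≠ y → x = z := by decide
  have hnonempty : Nonempty V := Fintype.card_pos_iff.mp (by omega)
  obtain ⟨v0⟩ := hnonempty
  obtain ⟨a, hv0a⟩ := exists_neighbor hconn (by omega) v0
  have hmid : ∀ w : V, G.dist v0 w = 2 → ∃ m, G.Adj v0 m ∧ G.Adj m w := by
    intro w hw
    obtain ⟨m, hmw, hm1⟩ := pred_of_dist hconn (show G.dist v0 w = 1 + 1 from hw)
    exact ⟨m, SimpleGraph.dist_eq_one_iff_adj.mp hm1, hmw⟩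
  have hD : ∀ w : V, w ≠ v0 → ¬ G.Adj v0 w → ∃ m, G.Adj v0 m ∧ G.Adj m w := by
    intro w hw hnadj
    have h0 : G.dist v0 w ≠ 0 := fun h => hw (hconn.dist_eq_zero_iff.mp h).symm
    have h1 : G.dist v0 w ≠ 1 := fun h => hnadj (SimpleGraph.dist_eq_one_iff_adj.mp h)
    have : G.dist v0 w = 2 := by have := hdist v0 w; omega
    exact hmid w this
  obtain ⟨b, hv0b, hba⟩ : ∃ b, G.Adj v0 b ∧ b ≠ a := by
    by_contra hc
    push_neg at hc
    have hall_a : ∀ m, G.Adj v0 m → m = a := fun m hm => hc m hm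
    have hcard : 1 < (({v0, a} : Finset V)ᶜ).card := by
      have h1 : ({v0, a} : Finset V).card ≤ 2 := Finset.card_insert_le _ _ |>.trans (by simp)
      have := Finset.card_compl ({v0, a} : Finset V)
      omega
    obtain ⟨w1, hw1, w2, hw2, hw12⟩ := Finset.one_lt_card.mp hcard
    simp only [Finset.mem_compl, Finset.mem_insert, Finset.mem_singleton, not_or] at hw1 hw2
    have haw : ∀ w : V, w ≠ v0 → w ≠ a → G.Adj a w := by
      intro w hwv0 hwa
      by_cases hadj : G.Adj v0 w
      · exact absurd (hall_a w hadj) hwa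
      · obtain ⟨m, hm1, hm2⟩ := hD w hwv0 hadj
        rwa [hall_a m hm1] at hm2
    have := hdeg a v0 w1 w2 hv0a.symm (haw w1 hw1.1 hw1.2) (haw w2 hw2.1 hw2.2)
    rcases this with h | h | h
    · exact hw1.1 h.symm
    · exact hw2.1 h.symm
    · exact hw12 h
  have hNv0 : ∀ m, G.Adj v0 m → m = a ∨ m = b := by
    intro m hm
    rcases hdeg v0 a b m hv0a hv0b hm with h | h | h
    · exact absurd h hba.symm
    · exact Or.inl h.symm
    · exact Or.inr h.symm
  obtain ⟨c, hc⟩ : ∃ c : V, c ∉ ({v0, a, b} : Finset V) := by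
    by_contra hcc
    push_neg at hcc
    have hsub : (Finset.univ : Finset V) ⊆ {v0, a, b} := fun x _ => hcc x
    have h3 : ({v0, a, b} : Finset V).card ≤ 3 := by
      refine (Finset.card_insert_le _ _).trans ?_
      have := Finset.card_insert_le a ({b} : Finset V)
      simp at this ⊢
      omega
    have := Finset.card_le_card hsub
    simp [Finset.card_univ] at this
    omega
  simp only [Finset.mem_insert, Finset.mem_singleton, not_or] at hc
  obtain ⟨hcv0, hca, hcb⟩ := hc
  have hfc : f c = f v0 := by
    by_cases hadj : G.Adj v0 c
    · rcases hNv0 c hadj with h | h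
      · exact absurd h hca
      · exact absurd h hcb
    · obtain ⟨m, hm1, hm2⟩ := hD c hcv0 hadj
      have hmfv0 : f m ≠ f v0 := fun h => hadj_ne hm1 h.symm
      have hcm : f c ≠ f m := fun h => hadj_ne hm2 h.symm
      exact hz _ _ _ hcm (fun h => hmfv0 h.symm)
  have hfa : f a ≠ f v0 := fun h => hadj_ne hv0a h.symm
  have hfb : f b ≠ f v0 := fun h => hadj_ne hv0b h.symm
  have hfab : f a = f b := hz _ _ _ hfa hfb
  have hac : G.Adj a c := hadj_of (fun h => hca h.symm) (by rw [hfc]; exact hfa)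
  have hbc : G.Adj b c := hadj_of (fun h => hcb h.symm) (by rw [hfc]; exact hfb)
  have hall : ∀ z : V, z = v0 ∨ z = a ∨ z = b ∨ z = c := by
    intro z
    by_contra hzz
    push_neg at hzz
    obtain ⟨hzv0, hza, hzb, hzc⟩ := hzz
    have hadjab : G.Adj a z ∨ G.Adj b z := by
      by_cases hadj : G.Adj v0 z
      · rcases hNv0 z hadj with h | h
        · exact absurd h hza
        · exact absurd h hzb
      · obtain ⟨m, hm1, hm2⟩ := hD z hzv0 hadj
        rcases hNv0 m hm1 with rfl | rfl
        · exact Or.inl hm2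
        · exact Or.inr hm2
    rcases hadjab with h | h
    · rcases hdeg a v0 c z hv0a.symm hac h with h' | h' | h'
      · exact hcv0 h'.symm
      · exact hzv0 h'.symm
      · exact hzc h'.symm
    · rcases hdeg b v0 c z hv0b.symm hbc h with h' | h' | h'
      · exact hcv0 h'.symm
      · exact hzv0 h'.symm
      · exact hzc h'.symm
  have hnv0c : ¬ G.Adj v0 c := fun h => hadj_ne h hfc.symm
  have hnab : ¬ G.Adj a b := fun h => hadj_ne h hfab
  have hinj : Injective (Sum.elim ![v0, c] ![a, b] : Fin 2 ⊕ Fin 2 → V) :=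
    inj_elim_K22 hv0a.ne hv0b.ne (fun h => hcv0 h.symm) (fun h => hba h.symm)
      (fun h => hca h.symm) (fun h => hcb h.symm)
  have hsurj : Surjective (Sum.elim ![v0, c] ![a, b] : Fin 2 ⊕ Fin 2 → V) := by
    intro v
    rcases hall v with rfl | rfl | rfl | rfl
    · exact ⟨Sum.inl 0, rfl⟩
    · exact ⟨Sum.inr 0, rfl⟩
    · exact ⟨Sum.inr 1, rfl⟩
    · exact ⟨Sum.inl 1, rfl⟩
  have hmap := map_elim_K22 hv0a hv0b hac hbc hnv0c hnab
  exact ⟨(RelIso.mk (Equiv.ofBijective (Sum.elim ![v0, c] ![a, b]) ⟨hinj, hsurj⟩)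
    (fun {s t} => hmap s t) : completeBipartiteGraph (Fin 2) (Fin 2) ≃g G).symm⟩

end AuxLemmas

/-- For every connected bipartite graph `G` on at least 4 vertices, other than `K_{2,2}`,
the distance matrix satisfies `Δ₂(D(G)) = 1` and `Δ₃(D(G)) = 2`; that is, the third
invariant factor equals 2. -/
theorem third_invariant_factor_bipartite
    {V : Type*} [Fintype V] [DecidableEq V] (G : SimpleGraph V)
    (hconn : G.Connected) (hbip : G.Colorable 2) (h4 : 4 ≤ Fintype.card V)
    (hK22 : ¬ Nonempty (G ≃g completeBipartiteGraph (Fin 2) (Fin 2))) :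
    IsMinorGcd 2 (Matrix.of fun u v : V => (G.dist u v : ℤ)) 1 ∧
    IsMinorGcd 3 (Matrix.of fun u v : V => (G.dist u v : ℤ)) 2 := by
  classical
  obtain ⟨C⟩ := hbip
  have hnonempty : Nonempty V := Fintype.card_pos_iff.mp (by omega)
  obtain ⟨v1⟩ := hnonempty
  obtain ⟨w1, hvw1⟩ := exists_neighbor hconn (by omega) v1
  constructor
  · refine ⟨fun _ _ _ _ => one_dvd _, ?_⟩
    intro e he
    have h := he ![v1, w1] ![v1, w1] (isMinorGcd_inj2 hvw1.ne) (isMinorGcd_inj2 hvw1.ne)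
    have hd1 : G.dist v1 w1 = 1 := SimpleGraph.dist_eq_one_iff_adj.mpr hvw1
    have hd2 : G.dist w1 v1 = 1 := SimpleGraph.dist_eq_one_iff_adj.mpr hvw1.symm
    have hdet : (((Matrix.of fun u v : V => (G.dist u v : ℤ)).submatrix
        ![v1, w1] ![v1, w1]).det) = -1 := by
      simp only [Matrix.det_fin_two, Matrix.submatrix_apply, Matrix.cons_val_zero,
        Matrix.cons_val_one, Matrix.head_cons, Matrix.of_apply]
      rw [hd1, hd2, SimpleGraph.dist_self, SimpleGraph.dist_self]
      norm_num
    rw [hdet] at h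
    exact dvd_neg.mp h
  · refine ⟨fun r c _ _ => minor_even hconn C r c, ?_⟩
    suffices hex : ∃ (r c : Fin 3 → V), Injective r ∧ Injective c ∧
        ((Matrix.of fun u v : V => (G.dist u v : ℤ)).submatrix r c).det = 2 by
      obtain ⟨r, c, hr, hc, hdet⟩ := hex
      intro e he
      have := he r c hr hc
      rwa [hdet] at this
    by_cases hA : ∃ v x y z : V, G.Adj v x ∧ G.Adj v y ∧ G.Adj v z ∧ x ≠ y ∧ x ≠ z ∧ y ≠ z
    · -- a vertex with three distinct neighbors
      obtain ⟨v, x, y, z, hvx, hvy, hvz, hxy, hxz, hyz⟩ := hA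
      have dvx : G.dist v x = 1 := SimpleGraph.dist_eq_one_iff_adj.mpr hvx
      have dxv : G.dist x v = 1 := SimpleGraph.dist_eq_one_iff_adj.mpr hvx.symm
      have dyv : G.dist y v = 1 := SimpleGraph.dist_eq_one_iff_adj.mpr hvy.symm
      have dvz : G.dist v z = 1 := SimpleGraph.dist_eq_one_iff_adj.mpr hvz
      have dxz : G.dist x z = 2 := dist_two_of_common hconn C hvx hvz hxz
      have dyx : G.dist y x = 2 := dist_two_of_common hconn C hvy hvx hxy.symm
      have dyz : G.dist y z = 2 := dist_two_of_common hconn C hvy hvz hyz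
      refine ⟨![v, x, y], ![v, x, z], isMinorGcd_inj3 hvx.ne hvy.ne hxy,
        isMinorGcd_inj3 hvx.ne hvz.ne hxz, ?_⟩
      simp only [Matrix.det_fin_three, Matrix.submatrix_apply, Matrix.cons_val_zero,
        Matrix.cons_val_one, Matrix.head_cons, Matrix.cons_val_two, Matrix.tail_cons,
        Matrix.of_apply]
      rw [dvx, dxv, dyv, dvz, dxz, dyx, dyz, SimpleGraph.dist_self, SimpleGraph.dist_self]
      norm_num
    · by_cases hB : ∃ u v : V, 3 ≤ G.dist u v
      · -- a geodesic of length 3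
        obtain ⟨u, d, hud⟩ := exists_dist_three hconn hB
        obtain ⟨c, hcd, huc⟩ := pred_of_dist hconn (show G.dist u d = 2 + 1 from hud)
        obtain ⟨b, hbc, hub⟩ := pred_of_dist hconn (show G.dist u c = 1 + 1 from huc)
        have dbc : G.dist b c = 1 := SimpleGraph.dist_eq_one_iff_adj.mpr hbc
        have dcb : G.dist c b = 1 := SimpleGraph.dist_eq_one_iff_adj.mpr hbc.symm
        have dcd : G.dist c d = 1 := SimpleGraph.dist_eq_one_iff_adj.mpr hcd
        have dbd : G.dist b d = 2 := by
          have t1 : G.dist b d ≤ G.dist b c + G.dist c d := hconn.dist_triangle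
          have t2 : G.dist u d ≤ G.dist u b + G.dist b d := hconn.dist_triangle
          omega
        have hub3 : u ≠ b := fun h => by rw [← h, SimpleGraph.dist_self] at hub; omega
        have huc3 : u ≠ c := fun h => by rw [← h, SimpleGraph.dist_self] at huc; omega
        have hud3 : u ≠ d := fun h => by rw [← h, SimpleGraph.dist_self] at hud; omega
        have hbc3 : b ≠ c := fun h => by rw [h] at hub; omega
        have hbd3 : b ≠ d := fun h => by rw [h] at hub; omega
        have hcd3 : c ≠ d := fun h => by rw [h] at huc; omega
        refine ⟨![u, b, c], ![b, c, d], isMinorGcd_inj3 hub3 huc3 hbc3,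
          isMinorGcd_inj3 hbc3 hbd3 hcd3, ?_⟩
        simp only [Matrix.det_fin_three, Matrix.submatrix_apply, Matrix.cons_val_zero,
          Matrix.cons_val_one, Matrix.head_cons, Matrix.cons_val_two, Matrix.tail_cons,
          Matrix.of_apply]
        rw [hub, huc, hud, dbc, dcb, dcd, dbd, SimpleGraph.dist_self, SimpleGraph.dist_self]
        norm_num
      · -- remaining case: the graph would be K_{2,2}
        exfalso
        push_neg at hA hB
        have hdeg : ∀ v x y z : V, G.Adj v x → G.Adj v y → G.Adj v z →
            x = y ∨ x = z ∨ y = z := by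
          intro v x y z h1 h2 h3
          by_cases hxy : x = y
          · exact Or.inl hxy
          by_cases hxz : x = z
          · exact Or.inr (Or.inl hxz)
          exact Or.inr (Or.inr (hA v x y z h1 h2 h3 hxy hxz))
        have hdist : ∀ u v : V, G.dist u v ≤ 2 := fun u v => by have := hB u v; omega
        exact hK22 (K22_case hconn C h4 hdeg hdist)
end

section
/- Every connected induced subgraph of the complete bipartite graph K_{2,2} other than K_{2,2} itself on at least 4 vertices does not exist; moreover, for any connected bipartite graph G with at least 5 vertices containing an induced 4-cycle, G contains an induced P_4 or an induced K_{2,3} whose pairwise distances in G agree with the distances within the subgraph. -/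
open Function

private lemma fin2_trans : ∀ a b c : Fin 2, a ≠ b → b ≠ c → a = c := by decide

private lemma exit_edge {V : Type} {G : SimpleGraph V} {s : V → Prop} :
    ∀ {x u : V}, G.Walk x u → s x → ¬ s u → ∃ a b, s a ∧ ¬ s b ∧ G.Adj a b := by
  intro x u p
  induction p with
  | nil => intro hx hu; exact absurd hx hu
  | @cons a b c h q ih =>
    intro ha hc
    by_cases hb : s b
    · exact ih hb hc
    · exact ⟨a, b, ha, hb, h⟩

private lemma dist_two {V : Type} {G : SimpleGraph V} {a b m : V} (hr : G.Reachable a b)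
    (hne : a ≠ b) (hnadj : ¬ G.Adj a b) (h1 : G.Adj a m) (h2 : G.Adj m b) :
    G.dist a b = 2 := by
  have hle : G.dist a b ≤ 2 := by
    have := SimpleGraph.dist_le (SimpleGraph.Walk.cons h1 (SimpleGraph.Walk.cons h2 SimpleGraph.Walk.nil))
    simpa using this
  have h0 : G.dist a b ≠ 0 := fun h => hne (hr.dist_eq_zero_iff.mp h)
  have h1' : G.dist a b ≠ 1 := fun h => hnadj (SimpleGraph.dist_eq_one_iff_adj.mp h)
  omega

private lemma dist_three {V : Type} {G : SimpleGraph V} {a b : V} (col : G.Coloring (Fin 2))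
    (hr : G.Reachable a b) (hcol : col a ≠ col b) (hnadj : ¬ G.Adj a b)
    (p : G.Walk a b) (hp : p.length = 3) : G.dist a b = 3 := by
  have hle : G.dist a b ≤ 3 := hp ▸ SimpleGraph.dist_le p
  have hne : a ≠ b := fun h => hcol (h ▸ rfl)
  have h0 : G.dist a b ≠ 0 := fun h => hne (hr.dist_eq_zero_iff.mp h)
  have h1 : G.dist a b ≠ 1 := fun h => hnadj (SimpleGraph.dist_eq_one_iff_adj.mp h)
  have h2 : G.dist a b ≠ 2 := by
    intro h
    obtain ⟨q, hq⟩ := SimpleGraph.exists_walk_of_dist_ne_zero (h ▸ (by omega : (2:ℕ) ≠ 0))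
    rw [h] at hq
    cases q with
    | nil => simp at hq
    | cons hadj q' =>
      cases q' with
      | nil => simp at hq
      | cons hadj2 q'' =>
        cases q'' with
        | nil =>
          exact fin2_trans _ _ _ (col.valid hadj) (col.valid hadj2) |> hcol
        | cons h3 q3 => simp [SimpleGraph.Walk.length_cons] at hq
  omega

private lemma main_case {V : Type} {G : SimpleGraph V}
    (hconn : G.Connected) (col : G.Coloring (Fin 2))
    {x y z w v : V}
    (hxy : x ≠ y) (hxz : x ≠ z) (hxw : x ≠ w) (hyz : y ≠ z) (hyw : y ≠ w) (hzw : z ≠ w)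
    (axy : G.Adj x y) (ayz : G.Adj y z) (azw : G.Adj z w) (awx : G.Adj w x)
    (nxz : ¬ G.Adj x z) (nyw : ¬ G.Adj y w)
    (hvx : v ≠ x) (hvy : v ≠ y) (hvz : v ≠ z) (hvw : v ≠ w)
    (havx : G.Adj v x) :
    ((∃ p : Fin 4 → V, Injective p ∧
        (∀ i j : Fin 4, G.Adj (p i) (p j) ↔ (i.val + 1 = j.val ∨ j.val + 1 = i.val)) ∧
        (∀ i j : Fin 4, G.dist (p i) (p j) = max (i.val - j.val) (j.val - i.val))) ∨
     (∃ f : Fin 2 ⊕ Fin 3 → V, Injective f ∧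
        (∀ u v : Fin 2 ⊕ Fin 3, G.Adj (f u) (f v) ↔ u.isLeft ≠ v.isLeft) ∧
        (∀ u v : Fin 2 ⊕ Fin 3, G.dist (f u) (f v) =
          if u = v then 0 else if u.isLeft = v.isLeft then 2 else 1))) := by
  have R : ∀ a b : V, G.Reachable a b := fun a b => hconn.preconnected a b
  -- colors
  have cvx : col v ≠ col x := col.valid havx
  have cxy : col x ≠ col y := col.valid axy
  have cyz : col y ≠ col z := col.valid ayz
  have czw : col z ≠ col w := col.valid azw
  have cwx : col w ≠ col x := col.valid awx
  have cvy : col v = col y := fin2_trans _ _ _ cvx cxy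
  have cvw : col v = col w := fin2_trans _ _ _ cvx (Ne.symm cwx)
  have cxz : col x = col z := fin2_trans _ _ _ cxy cyz
  have nvy : ¬ G.Adj v y := fun h => col.valid h cvy
  have nvw : ¬ G.Adj v w := fun h => col.valid h cvw
  by_cases havz : G.Adj v z
  · -- K_{2,3} on {x,z} × {v,y,w}
    right
    refine ⟨Sum.elim ![x, z] ![v, y, w], ?_, ?_, ?_⟩
    · intro a b h
      rcases a with a | a <;> rcases b with b | b <;>
        fin_cases a <;> fin_cases b <;> simp_all [Matrix.cons_val_zero, Matrix.cons_val_one]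
    · have nzx : ¬ G.Adj z x := fun h => nxz h.symm
      have nwy : ¬ G.Adj w y := fun h => nyw h.symm
      have nyv : ¬ G.Adj y v := fun h => nvy h.symm
      have nwv : ¬ G.Adj w v := fun h => nvw h.symm
      rintro (a | a) (b | b) <;> fin_cases a <;> fin_cases b <;>
        simp_all [G.loopless, axy.symm, ayz.symm, azw.symm, awx.symm, havx.symm, havz.symm]
    · have dxz : G.dist x z = 2 := dist_two (R x z) hxz nxz axy ayz
      have dvy : G.dist v y = 2 := dist_two (R v y) hvy nvy havx axy
      have dvw : G.dist v w = 2 := dist_two (R v w) hvw nvw havx awx.symm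
      have dyw : G.dist y w = 2 := dist_two (R y w) hyw nyw axy.symm awx.symm
      have dzx : G.dist z x = 2 := by rw [SimpleGraph.dist_comm]; exact dxz
      have dyv : G.dist y v = 2 := by rw [SimpleGraph.dist_comm]; exact dvy
      have dwv : G.dist w v = 2 := by rw [SimpleGraph.dist_comm]; exact dvw
      have dwy : G.dist w y = 2 := by rw [SimpleGraph.dist_comm]; exact dyw
      have one : ∀ a b : V, G.Adj a b → G.dist a b = 1 := fun a b h =>
        SimpleGraph.dist_eq_one_iff_adj.mpr h
      rintro (a | a) (b | b) <;> fin_cases a <;> fin_cases b <;>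
        simp_all [SimpleGraph.dist_self, one _ _ axy, one _ _ ayz.symm, one _ _ azw,
          one _ _ awx, one _ _ havx.symm, one _ _ havz.symm, one _ _ axy.symm,
          one _ _ ayz, one _ _ azw.symm, one _ _ awx.symm, one _ _ havx, one _ _ havz]
  · -- P4 : v - x - y - z
    left
    refine ⟨![v, x, y, z], ?_, ?_, ?_⟩
    · intro a b h
      fin_cases a <;> fin_cases b <;> simp_all
    · have nzx : ¬ G.Adj z x := fun h => nxz h.symm
      have nyv : ¬ G.Adj y v := fun h => nvy h.symm
      have nzv : ¬ G.Adj z v := fun h => havz h.symm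
      intro i j
      fin_cases i <;> fin_cases j <;>
        simp_all [G.loopless, axy.symm, ayz.symm, havx.symm]
    · have dvy : G.dist v y = 2 := dist_two (R v y) hvy nvy havx axy
      have dxz : G.dist x z = 2 := dist_two (R x z) hxz nxz axy ayz
      have dvz : G.dist v z = 3 := by
        refine dist_three col (R v z) ?_ havz
          (SimpleGraph.Walk.cons havx (SimpleGraph.Walk.cons axy
            (SimpleGraph.Walk.cons ayz SimpleGraph.Walk.nil))) rfl
        rw [cvy]; exact cyz
      have dyv : G.dist y v = 2 := by rw [SimpleGraph.dist_comm]; exact dvy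
      have dzx : G.dist z x = 2 := by rw [SimpleGraph.dist_comm]; exact dxz
      have dzv : G.dist z v = 3 := by rw [SimpleGraph.dist_comm]; exact dvz
      have one : ∀ a b : V, G.Adj a b → G.dist a b = 1 := fun a b h =>
        SimpleGraph.dist_eq_one_iff_adj.mpr h
      intro i j
      fin_cases i <;> fin_cases j <;>
        simp_all [SimpleGraph.dist_self, one _ _ havx, one _ _ havx.symm,
          one _ _ axy, one _ _ axy.symm, one _ _ ayz, one _ _ ayz.symm]

/-- (1) `K_{2,2}` has exactly 4 vertices, so there is no induced subgraph on at least 4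
vertices other than `K_{2,2}` itself: any vertex subset of size at least 4 is the whole
vertex set.  (2) Moreover, every connected bipartite graph `G` on at least 5 vertices
containing an induced 4-cycle contains an induced `P₄` or an induced `K_{2,3}` whose
pairwise distances in `G` agree with the distances within the subgraph. -/
theorem induced_P4_or_K23_of_bipartite_with_C4 :
    (∀ S : Finset (Fin 2 ⊕ Fin 2), 4 ≤ S.card → S = Finset.univ) ∧
    (∀ (V : Type) (_ : Fintype V) (_ : DecidableEq V) (G : SimpleGraph V),
      G.Connected → G.Colorable 2 → 5 ≤ Fintype.card V →
      (∃ x y z w : V, x ≠ y ∧ x ≠ z ∧ x ≠ w ∧ y ≠ z ∧ y ≠ w ∧ z ≠ w ∧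
        G.Adj x y ∧ G.Adj y z ∧ G.Adj z w ∧ G.Adj w x ∧ ¬ G.Adj x z ∧ ¬ G.Adj y w) →
      ((∃ p : Fin 4 → V, Injective p ∧
          (∀ i j : Fin 4, G.Adj (p i) (p j) ↔ (i.val + 1 = j.val ∨ j.val + 1 = i.val)) ∧
          (∀ i j : Fin 4, G.dist (p i) (p j) = max (i.val - j.val) (j.val - i.val))) ∨
       (∃ f : Fin 2 ⊕ Fin 3 → V, Injective f ∧
          (∀ u v : Fin 2 ⊕ Fin 3, G.Adj (f u) (f v) ↔ u.isLeft ≠ v.isLeft) ∧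
          (∀ u v : Fin 2 ⊕ Fin 3, G.dist (f u) (f v) =
            if u = v then 0 else if u.isLeft = v.isLeft then 2 else 1)))) := by
  constructor
  · intro S hS
    refine Finset.eq_univ_of_card S ?_
    have h1 := Finset.card_le_univ S
    have h2 : Fintype.card (Fin 2 ⊕ Fin 2) = 4 := by simp
    omega
  · rintro V _ _ G hconn hcol hcard
      ⟨x, y, z, w, hxy, hxz, hxw, hyz, hyw, hzw, axy, ayz, azw, awx, nxz, nyw⟩
    obtain ⟨col⟩ := hcol
    have h4 : ({x, y, z, w} : Finset V).card ≤ 4 := by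
      apply (Finset.card_insert_le _ _).trans
      apply Nat.succ_le_succ
      apply (Finset.card_insert_le _ _).trans
      apply Nat.succ_le_succ
      apply (Finset.card_insert_le _ _).trans
      simp
    have : ∃ u, u ∉ ({x, y, z, w} : Finset V) := by
      by_contra h
      push_neg at h
      have hsub : (Finset.univ : Finset V) ⊆ {x, y, z, w} := fun u _ => h u
      have := Finset.card_le_card hsub
      rw [Finset.card_univ] at this
      omega
    obtain ⟨u, hu⟩ := this
    obtain ⟨a, b, ha, hb, hab⟩ :=
      exit_edge (s := fun t => t ∈ ({x, y, z, w} : Finset V))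
        ((hconn.preconnected x u).some) (by simp) hu
    simp only [Finset.mem_insert, Finset.mem_singleton] at ha hb
    push_neg at hb
    obtain ⟨hbx, hby, hbz, hbw⟩ := hb
    rcases ha with rfl | rfl | rfl | rfl
    · exact main_case hconn col hxy hxz hxw hyz hyw hzw axy ayz azw awx nxz nyw
        hbx hby hbz hbw hab.symm
    · exact main_case hconn col hyz hyw (Ne.symm hxy) hzw (Ne.symm hxz) (Ne.symm hxw)
        ayz azw awx axy (fun h => nyw h) (fun h => nxz h.symm)
        hby hbz hbw hbx hab.symm
    · exact main_case hconn col hzw (Ne.symm hxz) (Ne.symm hyz) (Ne.symm hxw) (Ne.symm hyw) hxy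
        azw awx axy ayz (fun h => nxz h.symm) (fun h => nyw h.symm)
        hbz hbw hbx hby hab.symm
    · exact main_case hconn col (Ne.symm hxw) (Ne.symm hyw) (Ne.symm hzw) hxy hxz hyz
        awx axy ayz azw (fun h => nyw h.symm) (fun h => nxz h)
        hbw hbx hby hbz hab.symm
end
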